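/- arXiv:1507.08688 — 2 statements merged into one kernel-verified Lean document; each statement's English description precedes it below -/
import Mathlib

section
/- Suppose h ∈ C_b^n(ℝ) and g ∈ C_P^n(ℝ^d) for some non-negative function P : ℝ^d → ℝ. Then, for all w ∈ ℝ^d and all indices i_1,…,i_n ∈ {1,…,d}, |∂^n/(∂w_{i_1}⋯∂w_{i_n}) h(g(w))| ≤ h_n · P(w). -/
open MeasureTheory ProbabilityTheory Real

noncomputable section

/-- The standard `d`-dimensional Gaussian measure (law of a standard Gaussian random
vector `Z` in `ℝ^d`). -/
def stdGauss (d : ℕ) : Measure (Fin d → ℝ) := Measure.pi fun _ => gaussianReal 0 1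

/-- Partial derivative of `f : ℝ^d → ℝ` in the `i`-th coordinate direction. -/
def pd {d : ℕ} (i : Fin d) (f : (Fin d → ℝ) → ℝ) : (Fin d → ℝ) → ℝ :=
  fun w => fderiv ℝ f w (Pi.single i 1)

/-- Iterated partial derivative `∂^n f / (∂w_{i_1} ⋯ ∂w_{i_n})` along a list of
coordinate indices. -/
def pdList {d : ℕ} : List (Fin d) → ((Fin d → ℝ) → ℝ) → ((Fin d → ℝ) → ℝ)
  | [], f => f
  | i :: l, f => pd i (pdList l f)

/-- Stirling number of the second kind `S(n,k)`, as a real number. -/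
def stirl (n k : ℕ) : ℝ :=
  ((k.factorial : ℝ))⁻¹ *
    ∑ j ∈ Finset.range (k + 1), (-1 : ℝ) ^ (k - j) * (k.choose j) * (j : ℝ) ^ n

/-- `h_n = ∑_{k=1}^n S(n,k) ‖h^{(k)}‖_∞`. -/
def hCoef (h : ℝ → ℝ) (n : ℕ) : ℝ :=
  ∑ k ∈ Finset.Icc 1 n, stirl n k * ⨆ x : ℝ, |iteratedDeriv k h x|

/-- The class `C_b^n(ℝ)`: `h` is `n` times differentiable with the derivatives of
order `1,…,n` bounded. -/
def CbClass (n : ℕ) (h : ℝ → ℝ) : Prop :=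
  ContDiff ℝ n h ∧ ∀ k, 1 ≤ k → k ≤ n → ∃ C, ∀ x : ℝ, |iteratedDeriv k h x| ≤ C

/-- The class `C_P^n(ℝ^d)`: all partial derivatives of `g` up to order `n` exist and
`|∂^k g(w)/(∂w_{i_1}⋯∂w_{i_k})|^{n/k} ≤ P w` for all `k = 1,…,n`. -/
def CPClass {d : ℕ} (n : ℕ) (P g : (Fin d → ℝ) → ℝ) : Prop :=
  ContDiff ℝ n g ∧ ∀ k, 1 ≤ k → k ≤ n → ∀ (i : Fin k → Fin d) (w : Fin d → ℝ),
    |pdList (List.ofFn i) g w| ^ ((n : ℝ) / (k : ℝ)) ≤ P w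

/-- The class `C_P^n(ℝ)` (univariate case). -/
def CPClass1 (n : ℕ) (P g : ℝ → ℝ) : Prop :=
  ContDiff ℝ n g ∧ ∀ k, 1 ≤ k → k ≤ n → ∀ w : ℝ,
    |iteratedDeriv k g w| ^ ((n : ℝ) / (k : ℝ)) ≤ P w

end

namespace StirlAux

noncomputable section


def Snat : ℕ → ℕ → ℕ
  | 0, 0 => 1
  | 0, _+1 => 0
  | _+1, 0 => 0
  | n+1, k+1 => Snat n k + (k+1) * Snat n (k+1)

lemma Snat_eq_zero_of_lt : ∀ n k, n < k → Snat n k = 0 := by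
  intro n
  induction n with
  | zero => intro k hk; match k, hk with | k+1, _ => rfl
  | succ n IH =>
    intro k hk
    match k, hk with
    | k+1, hk =>
      show Snat n k + (k+1) * Snat n (k+1) = 0
      rw [IH k (by omega), IH (k+1) (by omega)]
      simp

def Tsum (n k : ℕ) : ℝ :=
  ∑ j ∈ Finset.range (k + 1), (-1 : ℝ) ^ (k - j) * (k.choose j) * (j : ℝ) ^ n

lemma stirl_eq (n k : ℕ) : stirl n k = (k.factorial : ℝ)⁻¹ * Tsum n k := rfl

lemma Tsum_succ_succ (n k : ℕ) :
    Tsum (n+1) (k+1) = (k+1) * (Tsum n (k+1) + Tsum n k) := by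
  set A := ∑ j ∈ Finset.range (k+1), (-1 : ℝ) ^ (k - j) * (k.choose j) * ((j : ℝ)+1) ^ n with hA
  set B := ∑ j ∈ Finset.range (k+1), (-1 : ℝ) ^ (k - j) * (k.choose (j+1)) * ((j : ℝ)+1) ^ n
    with hB
  have hU : Tsum (n+1) (k+1) = (k+1) * A := by
    rw [Tsum, Finset.sum_range_succ']
    rw [show ((-1:ℝ) ^ (k+1-0) * ((k+1).choose 0) * ((0:ℕ) : ℝ)^(n+1)) = 0 by simp]
    rw [add_zero, hA, Finset.mul_sum]
    refine Finset.sum_congr rfl fun j hj => ?_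
    have h1 : k + 1 - (j+1) = k - j := by omega
    have h2 : (((k+1).choose (j+1)) : ℝ) * ((j:ℝ)+1) = ((k:ℝ)+1) * (k.choose j) := by
      have h := Nat.add_one_mul_choose_eq k j
      have h' : ((k+1) * k.choose j : ℕ) = ((k+1).choose (j+1) * (j+1) : ℕ) := h
      have := congrArg (fun m : ℕ => (m : ℝ)) h'
      push_cast at this
      linarith
    have h3 : (((j+1:ℕ)) : ℝ)^(n+1) = ((j:ℝ)+1)^n * ((j:ℝ)+1) := by push_cast; ring
    rw [h1, h3]
    push_cast
    linear_combination ((-1:ℝ)^(k-j) * ((j:ℝ)+1)^n) * h2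
  have e1 : Tsum n (k+1) = A + B + (-1:ℝ)^(k+1) * (0:ℝ)^n := by
    rw [Tsum, Finset.sum_range_succ']
    rw [show ((-1:ℝ) ^ (k+1-0) * ((k+1).choose 0) * ((0:ℕ):ℝ)^n) = (-1:ℝ)^(k+1) * (0:ℝ)^n
      by simp]
    congr 1
    rw [hA, hB, ← Finset.sum_add_distrib]
    refine Finset.sum_congr rfl fun j hj => ?_
    have h1 : k + 1 - (j+1) = k - j := by omega
    have h2 : (((k+1).choose (j+1)) : ℝ) = (k.choose j : ℝ) + (k.choose (j+1) : ℝ) := by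
      rw [Nat.choose_succ_succ]; push_cast; ring
    rw [h1, h2]
    push_cast
    ring
  have e2 : B = - Tsum n k + (-1:ℝ)^k * (0:ℝ)^n := by
    have hBtop : B = ∑ j ∈ Finset.range k, (-1 : ℝ) ^ (k - j) * (k.choose (j+1)) * ((j:ℝ)+1) ^ n := by
      rw [hB, Finset.sum_range_succ]
      rw [show ((-1 : ℝ) ^ (k - k) * (k.choose (k+1)) * ((k : ℝ)+1) ^ n) = 0 by
        simp [Nat.choose_succ_self]]
      rw [add_zero]
    have e3 : Tsum n k
        = (∑ j ∈ Finset.range k, (-1 : ℝ) ^ (k - (j+1)) * (k.choose (j+1)) * ((j:ℝ)+1) ^ n)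
          + (-1:ℝ)^k * (0:ℝ)^n := by
      rw [Tsum, Finset.sum_range_succ']
      push_cast
      simp
    rw [hBtop, e3]
    rw [neg_add]
    rw [← Finset.sum_neg_distrib]
    have : ∀ j ∈ Finset.range k,
        (-1 : ℝ) ^ (k - j) * (k.choose (j+1)) * ((j:ℝ)+1) ^ n
          = -((-1 : ℝ) ^ (k - (j+1)) * (k.choose (j+1)) * ((j:ℝ)+1) ^ n) := by
      intro j hj
      have hj' : j < k := Finset.mem_range.mp hj
      have : k - j = (k - (j+1)) + 1 := by omega
      rw [this, pow_succ]
      ring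
    rw [Finset.sum_congr rfl this]
    ring
  rw [hU, e1, e2]
  ring

lemma Snat_cast : ∀ n k, (Snat n k : ℝ) = stirl n k := by
  intro n
  induction n with
  | zero =>
    intro k
    match k with
    | 0 => simp [Snat, stirl]
    | k+1 =>
      show ((0:ℕ) : ℝ) = stirl 0 (k+1)
      rw [stirl_eq]
      have : Tsum 0 (k+1) = 0 := by
        have h : Tsum 0 (k+1) = ((1:ℝ) + -1)^(k+1) := by
          rw [add_pow, Tsum]
          refine Finset.sum_congr rfl fun j _ => ?_
          rw [pow_zero, one_pow]
          ring
        rw [h]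
        norm_num
      rw [this]; simp
  | succ n IH =>
    intro k
    match k with
    | 0 =>
      show ((0:ℕ):ℝ) = stirl (n+1) 0
      rw [stirl_eq]
      have : Tsum (n+1) 0 = 0 := by
        simp [Tsum, Finset.sum_range_one]
      rw [this]; simp
    | k+1 =>
      show ((Snat n k + (k+1) * Snat n (k+1) : ℕ) : ℝ) = stirl (n+1) (k+1)
      rw [stirl_eq, Tsum_succ_succ]
      push_cast
      rw [IH k, IH (k+1), stirl_eq, stirl_eq]
      have hf : ((k+1).factorial : ℝ) = ((k:ℝ)+1) * (k.factorial : ℝ) := by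
        rw [Nat.factorial_succ]; push_cast; ring
      rw [hf]
      have h1 : (k.factorial : ℝ) ≠ 0 := Nat.cast_ne_zero.mpr (Nat.factorial_ne_zero k)
      have h2 : ((k:ℝ)+1) ≠ 0 := by positivity
      field_simp
      ring

lemma sum_length : ∀ (n : ℕ) (F : ℕ → ℝ),
    ∑ c : OrderedFinpartition n, F c.length
      = ∑ k ∈ Finset.range (n+1), (Snat n k : ℝ) * F k := by
  intro n
  induction n with
  | zero =>
    intro F
    rw [Finset.sum_range_one, Fintype.sum_unique]
    show F (OrderedFinpartition.atomic 0).length = (Snat 0 0 : ℝ) * F 0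
    simp [Snat]
  | succ n IH =>
    intro F
    have e1 : ∑ c : OrderedFinpartition (n+1), F c.length
        = ∑ p : (Σ c : OrderedFinpartition n, Option (Fin c.length)),
            F ((p.1.extend p.2).length) :=
      (Fintype.sum_equiv (OrderedFinpartition.extendEquiv n)
        (fun p => F ((p.1.extend p.2).length)) (fun c => F c.length) (fun p => rfl)).symm
    rw [e1, ← Finset.univ_sigma_univ, Finset.sum_sigma]
    have e2 : ∀ c : OrderedFinpartition n,
        ∑ o : Option (Fin c.length), F ((c.extend o).length)
          = F (c.length + 1) + (c.length : ℝ) * F c.length := by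
      intro c
      rw [Fintype.sum_option]
      congr 1
      have : ∑ i : Fin c.length, F ((c.extend (some i)).length)
          = ∑ _i : Fin c.length, F c.length := rfl
      rw [this, Finset.sum_const, Finset.card_univ, Fintype.card_fin, nsmul_eq_mul]
    rw [Finset.sum_congr rfl (fun c _ => e2 c)]
    rw [IH (fun k => F (k+1) + (k : ℝ) * F k)]
    have e3 : ∀ k, ((Snat (n+1) (k+1) : ℝ)) = (Snat n k : ℝ) + ((k:ℝ)+1) * (Snat n (k+1) : ℝ) := by
      intro k
      show ((Snat n k + (k+1) * Snat n (k+1) : ℕ) : ℝ) = _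
      push_cast
      ring
    have RHS : ∑ k ∈ Finset.range (n+2), (Snat (n+1) k : ℝ) * F k
        = ∑ k ∈ Finset.range (n+1),
            ((Snat n k : ℝ) * F (k+1) + ((k:ℝ)+1) * (Snat n (k+1) : ℝ) * F (k+1)) := by
      rw [Finset.sum_range_succ']
      rw [show ((Snat (n+1) 0 : ℝ) * F 0) = 0 by simp [Snat]]
      rw [add_zero]
      refine Finset.sum_congr rfl fun k _ => ?_
      rw [e3 k]; ring
    rw [RHS, Finset.sum_add_distrib]
    have LHS : ∑ k ∈ Finset.range (n+1), (Snat n k:ℝ) * (F (k+1) + (k:ℝ) * F k)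
        = ∑ k ∈ Finset.range (n+1), (Snat n k:ℝ) * F (k+1)
          + ∑ k ∈ Finset.range (n+1), (k:ℝ) * (Snat n k:ℝ) * F k := by
      rw [← Finset.sum_add_distrib]; exact Finset.sum_congr rfl fun k _ => by ring
    rw [LHS]
    congr 1
    rw [Finset.sum_range_succ' (fun k => (k:ℝ) * (Snat n k:ℝ) * F k) n]
    rw [show (((0:ℕ)):ℝ) * ((Snat n 0 : ℕ):ℝ) * F 0 = 0 by simp]
    rw [add_zero]
    rw [Finset.sum_range_succ (fun k => ((k:ℝ)+1) * (Snat n (k+1):ℝ) * F (k+1)) n]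
    rw [show (((n:ℝ)+1) * ((Snat n (n+1) : ℕ):ℝ) * F (n+1)) = 0 by
      rw [Snat_eq_zero_of_lt n (n+1) (by omega)]; simp]
    rw [add_zero]
    refine Finset.sum_congr rfl fun k _ => ?_
    push_cast
    ring



lemma pdList_ofFn {d N : ℕ} {f : (Fin d → ℝ) → ℝ} (hf : ContDiff ℝ N f) :
    ∀ m : ℕ, m ≤ N → ∀ (v : Fin m → Fin d) (w : Fin d → ℝ),
      pdList (List.ofFn v) f w
        = iteratedFDeriv ℝ m f w (fun j => Pi.single (v j) 1) := by
  intro m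
  induction m with
  | zero =>
    intro _ v w
    rw [List.ofFn_zero]
    show f w = _
    rw [iteratedFDeriv_zero_apply]
  | succ m IH =>
    intro hm v w
    rw [List.ofFn_succ]
    show pd (v 0) (pdList (List.ofFn fun j => v j.succ) f) w = _
    have hIH : pdList (List.ofFn fun j => v j.succ) f
        = fun w' => iteratedFDeriv ℝ m f w' (fun j => Pi.single (v j.succ) 1) :=
      funext fun w' => IH (by omega) _ w'
    rw [pd, hIH]
    set vt : Fin m → (Fin d → ℝ) := fun j => Pi.single (v j.succ) 1 with hvt
    have hD : DifferentiableAt ℝ (iteratedFDeriv ℝ m f) w := by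
      have : (m : WithTop ℕ∞) < N := by exact_mod_cast (by omega : m < N)
      exact (hf.differentiable_iteratedFDeriv this).differentiableAt
    set L := ContinuousMultilinearMap.apply ℝ (fun _ : Fin m => (Fin d → ℝ)) ℝ vt with hL
    have hcomp : (fun w' => iteratedFDeriv ℝ m f w' vt)
        = fun w' => L (iteratedFDeriv ℝ m f w') := rfl
    have hfd : fderiv ℝ (fun w' => L (iteratedFDeriv ℝ m f w')) w
        = L.comp (fderiv ℝ (iteratedFDeriv ℝ m f) w) :=
      (L.hasFDerivAt.comp w hD.hasFDerivAt).fderiv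
    rw [hcomp, hfd]
    rw [iteratedFDeriv_succ_apply_left]
    rfl


end

end StirlAux

/-- Lemma 2.1: if `h ∈ C_b^n(ℝ)` and `g ∈ C_P^n(ℝ^d)` for a non-negative
dominating function `P`, then all `n`-th order partial derivatives of `h ∘ g` are bounded by
`h_n · P(w)`. -/
theorem abs_pdList_comp_le {d n : ℕ} (hd : 1 ≤ d) (hn : 1 ≤ n)
    (h : ℝ → ℝ) (P g : (Fin d → ℝ) → ℝ) (hP : ∀ w, 0 ≤ P w)
    (hh : CbClass n h) (hg : CPClass n P g) :
    ∀ (w : Fin d → ℝ) (i : Fin n → Fin d),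
      |pdList (List.ofFn i) (fun x => h (g x)) w| ≤ hCoef h n * P w := by
  classical
  intro w i
  set suph : ℕ → ℝ := fun k => ⨆ x : ℝ, |iteratedDeriv k h x| with hsuph
  have Hh : HasFTaylorSeriesUpTo (n : ℕ∞) h (ftaylorSeries ℝ h) :=
    contDiff_iff_ftaylorSeries.mp (by exact_mod_cast hh.1)
  have Hg : HasFTaylorSeriesUpTo (n : ℕ∞) g (ftaylorSeries ℝ g) :=
    contDiff_iff_ftaylorSeries.mp (by exact_mod_cast hg.1)
  have Hcomp : HasFTaylorSeriesUpToOn (n : ℕ∞) (h ∘ g)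
      (fun x => (ftaylorSeries ℝ h (g x)).taylorComp (ftaylorSeries ℝ g x)) Set.univ :=
    HasFTaylorSeriesUpToOn.comp (hasFTaylorSeriesUpToOn_univ_iff.mpr Hh)
      (hasFTaylorSeriesUpToOn_univ_iff.mpr Hg) (Set.mapsTo_univ _ _)
  have key : (ftaylorSeries ℝ h (g w)).taylorComp (ftaylorSeries ℝ g w) n
      = iteratedFDeriv ℝ n (h ∘ g) w :=
    (hasFTaylorSeriesUpToOn_univ_iff.mp Hcomp).eq_iteratedFDeriv (le_refl _) w
  have hcd : ContDiff ℝ (n : ℕ) (fun x => h (g x)) := hh.1.comp hg.1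
  rw [StirlAux.pdList_ofFn hcd n le_rfl i w]
  have e : iteratedFDeriv ℝ n (fun x => h (g x)) = iteratedFDeriv ℝ n (h ∘ g) := rfl
  rw [e, ← key]
  set V : Fin n → (Fin d → ℝ) := fun j => Pi.single (i j) 1 with hV
  have expand : (ftaylorSeries ℝ h (g w)).taylorComp (ftaylorSeries ℝ g w) n V
      = ∑ c : OrderedFinpartition n,
          ((ftaylorSeries ℝ h (g w)).compAlongOrderedFinpartition (ftaylorSeries ℝ g w) c) V := by
    rw [FormalMultilinearSeries.taylorComp, ContinuousMultilinearMap.sum_apply]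
  rw [expand]
  have hn0 : (0:ℝ) < (n:ℝ) := by exact_mod_cast (by omega : 0 < n)
  have bound : ∀ c : OrderedFinpartition n,
      |((ftaylorSeries ℝ h (g w)).compAlongOrderedFinpartition (ftaylorSeries ℝ g w) c) V|
        ≤ suph c.length * P w := by
    intro c
    have hlen1 : 1 ≤ c.length := c.length_pos (by omega)
    have hlenn : c.length ≤ n := c.length_le
    set a : Fin c.length → ℝ :=
      fun m => iteratedFDeriv ℝ (c.partSize m) g w (V ∘ c.emb m) with ha
    have hshow : ((ftaylorSeries ℝ h (g w)).compAlongOrderedFinpartition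
        (ftaylorSeries ℝ g w) c) V = iteratedFDeriv ℝ c.length h (g w) a := rfl
    rw [hshow]
    have hfact : iteratedFDeriv ℝ c.length h (g w) a
        = (∏ m, a m) * iteratedDeriv c.length h (g w) := by
      have h1 : a = fun m => (a m) • (1:ℝ) := by funext m; simp
      calc iteratedFDeriv ℝ c.length h (g w) a
          = iteratedFDeriv ℝ c.length h (g w) (fun m => (a m) • (1:ℝ)) := by rw [← h1]
        _ = (∏ m, a m) • iteratedFDeriv ℝ c.length h (g w) (fun _ => (1:ℝ)) :=
            ContinuousMultilinearMap.map_smul_univ _ _ _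
        _ = (∏ m, a m) * iteratedDeriv c.length h (g w) := by
            rw [iteratedDeriv_eq_iteratedFDeriv, smul_eq_mul]
    have hb : ∀ m : Fin c.length, |a m| ≤ P w ^ ((c.partSize m : ℝ)/(n : ℝ)) := by
      intro m
      have hp := hg.2 (c.partSize m) (c.partSize_pos m) (c.partSize_le m)
        (fun j => i (c.emb m j)) w
      rw [StirlAux.pdList_ofFn hg.1 (c.partSize m) (c.partSize_le m)
        (fun j => i (c.emb m j)) w] at hp
      have hp' : |a m| ^ ((n:ℝ)/(c.partSize m : ℝ)) ≤ P w := hp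
      have hk0 : (0:ℝ) < (c.partSize m : ℝ) := by exact_mod_cast c.partSize_pos m
      have hxe : |a m| = (|a m| ^ ((n:ℝ)/(c.partSize m:ℝ))) ^ ((c.partSize m:ℝ)/(n:ℝ)) := by
        rw [← Real.rpow_mul (abs_nonneg _),
          show ((n:ℝ)/(c.partSize m:ℝ)) * ((c.partSize m:ℝ)/(n:ℝ)) = 1 by field_simp,
          Real.rpow_one]
      rw [hxe]
      exact Real.rpow_le_rpow (Real.rpow_nonneg (abs_nonneg _) _) hp'
        (le_of_lt (div_pos hk0 hn0))
    have hprod : (∏ m, |a m|) ≤ P w := by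
      have h1 : (∏ m, |a m|) ≤ ∏ m, P w ^ ((c.partSize m : ℝ)/(n:ℝ)) :=
        Finset.prod_le_prod (fun m _ => abs_nonneg _) (fun m _ => hb m)
      refine h1.trans (le_of_eq ?_)
      have hsum : ∑ m : Fin c.length, ((c.partSize m : ℝ)/(n:ℝ)) = 1 := by
        rw [← Finset.sum_div]
        have h2 : ∑ m : Fin c.length, c.partSize m = n := by
          simpa using c.sum_sigma_eq_sum (fun _ => (1:ℕ))
        have h3 : ∑ m : Fin c.length, (c.partSize m : ℝ) = (n : ℝ) := by exact_mod_cast h2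
        rw [h3]
        field_simp
      rcases (hP w).eq_or_lt with h0 | h0
      · rw [← h0]
        refine Finset.prod_eq_zero (Finset.mem_univ (⟨0, by omega⟩ : Fin c.length)) ?_
        exact Real.zero_rpow (ne_of_gt (div_pos (by exact_mod_cast c.partSize_pos _) hn0))
      · rw [← Real.rpow_sum_of_pos h0, hsum, Real.rpow_one]
    have hs : |iteratedDeriv c.length h (g w)| ≤ suph c.length := by
      obtain ⟨C, hC⟩ := hh.2 c.length hlen1 hlenn
      exact le_ciSup ⟨C, by rintro y ⟨x, rfl⟩; exact hC x⟩ (g w)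
    rw [hfact, abs_mul, Finset.abs_prod]
    calc (∏ m, |a m|) * |iteratedDeriv c.length h (g w)|
        ≤ P w * suph c.length := mul_le_mul hprod hs (abs_nonneg _) (hP w)
      _ = suph c.length * P w := mul_comm _ _
  refine le_trans (Finset.abs_sum_le_sum_abs _ _) ?_
  refine le_trans (Finset.sum_le_sum fun c _ => bound c) ?_
  rw [← Finset.sum_mul]
  rw [StirlAux.sum_length n suph]
  refine mul_le_mul_of_nonneg_right (le_of_eq ?_) (hP w)
  obtain ⟨m, rfl⟩ : ∃ m, n = m+1 := ⟨n-1, by omega⟩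
  have hc : hCoef h (m+1) = ∑ k ∈ Finset.Icc 1 (m+1), stirl (m+1) k * suph k := rfl
  rw [hc]
  rw [← Finset.Ico_add_one_right_eq_Icc, Finset.sum_Ico_eq_sum_range]
  rw [Finset.sum_range_succ' (fun k => ((StirlAux.Snat (m+1) k : ℕ) : ℝ) * suph k) (m+1)]
  rw [show ((StirlAux.Snat (m+1) 0 : ℕ):ℝ) * suph 0 = 0 by
    rw [show StirlAux.Snat (m+1) 0 = 0 from rfl]; simp]
  rw [add_zero]
  refine Finset.sum_congr rfl fun k _ => ?_
  rw [StirlAux.Snat_cast, add_comm 1 k]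
end

section
/- Let Σ be a non-negative definite d×d matrix and suppose g : ℝ^d → ℝ is an even function, i.e. g(w) = g(−w) for all w ∈ ℝ^d. Then the solution f of the multivariate normal Stein equation with test function h∘g is an even function. Moreover, for odd k ≥ 1 and any indices i_1,…,i_k ∈ {1,…,d}, provided ∂^k f/(∂w_{i_1}⋯∂w_{i_k}) exists and the expectation is well-defined, E[∂^k f/(∂w_{i_1}⋯∂w_{i_k})(Σ^{1/2}Z)] = 0. -/
open MeasureTheory ProbabilityTheory Real

noncomputable section

/-- The non-negative definite square root of a positive semidefinite matrix (as in the
older Mathlib `Matrix.PosSemidef.sqrt`, since removed). -/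
def Matrix.PosSemidef.sqrt {n : Type*} [Fintype n] [DecidableEq n]
    {A : Matrix n n ℝ} (hA : A.PosSemidef) : Matrix n n ℝ :=
  (hA.1.eigenvectorUnitary : Matrix n n ℝ) *
    Matrix.diagonal ((↑) ∘ (fun x : ℝ => √x) ∘ hA.1.eigenvalues) *
    (star hA.1.eigenvectorUnitary : Matrix n n ℝ)

end

/-
Everything rests on the symmetry `Z ↦ -Z` of the standard Gaussian. For even `g`, substituting
`z ↦ -z` in the inner expectation turns the integrand at `-w` into the one at `w`, so `f` is even.
Differentiating `f (-w) = f w` shows that a `k`-th partial derivative of `f` has parity `(-1)^k`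
(the chain rule through the linear isomorphism `-id` holds for `fderiv` everywhere, also where it
is `0` by convention), so for odd `k` it is an odd function, and its expectation at `Σ^{1/2}Z`
equals its own negative.
-/

lemma gaussianReal_measurePreserving_neg (v : NNReal) :
    MeasurePreserving (fun x : ℝ => -x) (gaussianReal 0 v) (gaussianReal 0 v) :=
  ⟨measurable_neg, by simpa using gaussianReal_map_neg (μ := 0) (v := v)⟩

lemma stdGauss_measurePreserving_neg (d : ℕ) :
    MeasurePreserving (fun z : Fin d → ℝ => -z) (stdGauss d) (stdGauss d) :=
  measurePreserving_pi _ _ fun _ => gaussianReal_measurePreserving_neg 1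

lemma integral_comp_neg_stdGauss {d : ℕ} (F : (Fin d → ℝ) → ℝ) :
    ∫ z, F (-z) ∂(stdGauss d) = ∫ z, F z ∂(stdGauss d) :=
  (stdGauss_measurePreserving_neg d).integral_comp
    (MeasurableEquiv.neg (Fin d → ℝ)).measurableEmbedding F

lemma integral_stdGauss_eq_zero_of_odd {d : ℕ} {F : (Fin d → ℝ) → ℝ}
    (hF : ∀ z, F (-z) = -F z) : ∫ z, F z ∂(stdGauss d) = 0 := by
  have h : ∫ z, F z ∂(stdGauss d) = -∫ z, F z ∂(stdGauss d) := by
    rw [← integral_neg, ← integral_comp_neg_stdGauss]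
    simp only [hF]
  linarith

lemma integral_stdGauss_comp_smul_neg_add {d : ℕ} {φ : (Fin d → ℝ) → ℝ}
    (hφ : ∀ w, φ (-w) = φ w) (a b : ℝ) (A : Matrix (Fin d) (Fin d) ℝ) (w : Fin d → ℝ) :
    ∫ z, φ (a • -w + b • A.mulVec z) ∂(stdGauss d) =
      ∫ z, φ (a • w + b • A.mulVec z) ∂(stdGauss d) := by
  rw [← integral_comp_neg_stdGauss]
  congr 1 with z
  rw [← hφ, Matrix.mulVec_neg]
  simp only [smul_neg, neg_add, neg_neg]

lemma pd_comp_neg {d : ℕ} (i : Fin d) (f : (Fin d → ℝ) → ℝ) :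
    pd i (fun x => f (-x)) = fun w => -pd i f (-w) := by
  funext w
  have h := (ContinuousLinearEquiv.neg ℝ (M := Fin d → ℝ)).comp_right_fderiv (f := f) (x := w)
  simp only [pd]
  rw [show (fun x => f (-x)) = f ∘ ContinuousLinearEquiv.neg ℝ from rfl, h]
  simp

lemma pd_const_smul {d : ℕ} (i : Fin d) (c : ℝ) (f : (Fin d → ℝ) → ℝ) :
    pd i (c • f) = c • pd i f := by
  funext w
  simp [pd, fderiv_const_smul_field]

lemma pdList_comp_neg {d : ℕ} (L : List (Fin d)) (f : (Fin d → ℝ) → ℝ) :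
    pdList L (fun x => f (-x)) = (-1 : ℝ) ^ L.length • fun w => pdList L f (-w) := by
  induction L with
  | nil => simp [pdList]
  | cons i L ih =>
    simp only [pdList, ih, pd_const_smul, pd_comp_neg, List.length_cons, pow_succ]
    funext w
    simp

lemma pdList_neg_of_even {d : ℕ} {f : (Fin d → ℝ) → ℝ} (hf : ∀ w, f (-w) = f w)
    (L : List (Fin d)) (w : Fin d → ℝ) :
    pdList L f (-w) = (-1 : ℝ) ^ L.length * pdList L f w := by
  have h := congrFun (pdList_comp_neg L f) (-w)
  simpa only [funext hf, Pi.smul_apply, neg_neg, smul_eq_mul] using h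

/-- Lemma 3.2: if `g` is an even function, the solution `f` of the
multivariate normal Stein equation with test function `h ∘ g` is even, and for odd `k`
the expectation of any `k`-th order partial derivative of `f` at `Σ^{1/2}Z` vanishes
(provided the derivative exists and the expectation is well-defined). -/
theorem steinSol_even_and_odd_partial_expectation_zero {d : ℕ}
    (S : Matrix (Fin d) (Fin d) ℝ) (hS : S.PosSemidef)
    (h : ℝ → ℝ) (g : (Fin d → ℝ) → ℝ) (hg : ∀ w, g (-w) = g w)
    (f : (Fin d → ℝ) → ℝ)
    (hf : ∀ w, f w = -∫ s in Set.Ioi (0 : ℝ),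
      ((∫ z, h (g (Real.exp (-s) • w
            + Real.sqrt (1 - Real.exp (-2 * s)) • hS.sqrt.mulVec z)) ∂(stdGauss d))
        - ∫ z, h (g (hS.sqrt.mulVec z)) ∂(stdGauss d))) :
    (∀ w, f (-w) = f w) ∧
      ∀ (k : ℕ), Odd k → 1 ≤ k → ∀ i : Fin k → Fin d,
        ContDiff ℝ k f →
        Integrable (fun z => pdList (List.ofFn i) f (hS.sqrt.mulVec z)) (stdGauss d) →
        ∫ z, pdList (List.ofFn i) f (hS.sqrt.mulVec z) ∂(stdGauss d) = 0 := by
  have hfe : ∀ w, f (-w) = f w := by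
    intro w
    simp only [hf, integral_stdGauss_comp_smul_neg_add (φ := fun x => h (g x)) fun x => by rw [hg]]
  refine ⟨hfe, fun k hk _ i _ _ => integral_stdGauss_eq_zero_of_odd fun z => ?_⟩
  rw [Matrix.mulVec_neg, pdList_neg_of_even hfe, List.length_ofFn, hk.neg_one_pow, neg_one_mul]
end
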